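/- arXiv:1509.00763 — 5 statements merged into one kernel-verified Lean document; each statement's English description precedes it below -/
import Mathlib

section
/- Let h : A ⥤ B be a functor that is bijective on objects and full, let g : C ⥤ D be a faithful functor, and let x : A ⥤ C and y : B ⥤ D be functors such that h ⋙ y = x ⋙ g. Then there exists a unique functor d : B ⥤ C such that h ⋙ d = x and d ⋙ g = y. -/
open CategoryTheory

/-- One-dimensional diagonal fill-in: a bijective-on-objects and full functor is orthogonal
to a faithful functor. -/
theorem bofull_faithful_unique_diagonal
    {A : Type*} [Category A] {B : Type*} [Category B]
    {C : Type*} [Category C] {D : Type*} [Category D]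
    (h : A ⥤ B) (hbij : Function.Bijective h.obj) (hfull : h.Full)
    (g : C ⥤ D) (hg : g.Faithful)
    (x : A ⥤ C) (y : B ⥤ D) (hsq : h ⋙ y = x ⋙ g) :
    ∃! d : B ⥤ C, h ⋙ d = x ∧ d ⋙ g = y := by
  haveI := hfull
  haveI := hg
  classical
  let e : A ≃ B := Equiv.ofBijective h.obj hbij
  have he : ∀ b, h.obj (e.symm b) = b := fun b => e.apply_symm_apply b
  have he' : ∀ a, e.symm (h.obj a) = a := fun a => e.symm_apply_apply a
  have hobj : ∀ a : A, y.obj (h.obj a) = g.obj (x.obj a) := by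
    intro a
    exact congrArg (fun F : A ⥤ D => F.obj a) hsq
  have key : ∀ {a a' : A} (u : a ⟶ a'),
      g.map (x.map u) =
        eqToHom (hobj a).symm ≫ y.map (h.map u) ≫ eqToHom (hobj a') := by
    intro a a' u
    have := Functor.congr_hom hsq u
    simp only [Functor.comp_map] at this
    rw [this]
    simp
  let d : B ⥤ C :=
    { obj := fun b => x.obj (e.symm b)
      map := fun {b b'} f =>
        x.map (h.preimage (eqToHom (he b) ≫ f ≫ eqToHom (he b').symm))
      map_id := by
        intro b
        apply g.map_injective
        rw [key]
        simp
      map_comp := by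
        intro b b' b'' f f'
        apply g.map_injective
        rw [Functor.map_comp, key, key, key]
        simp }
  refine ⟨d, ⟨?_, ?_⟩, ?_⟩
  · refine CategoryTheory.Functor.ext (fun a => congrArg x.obj (he' a)) ?_
    intro a a' u
    apply g.map_injective
    simp only [Functor.comp_map, d]
    rw [key, Functor.map_comp, Functor.map_comp, key]
    simp [eqToHom_map]
  · refine CategoryTheory.Functor.ext (fun b => (hobj (e.symm b)).symm.trans (congrArg y.obj (he b))) ?_
    intro b b' f
    simp only [Functor.comp_map, d]
    rw [key]
    simp [eqToHom_map]
  · rintro d' ⟨hd1, hd2⟩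
    have hob : ∀ b, d'.obj b = d.obj b := by
      intro b
      have := congrArg (fun F : A ⥤ C => F.obj (e.symm b)) hd1
      simp only [Functor.comp_obj] at this
      calc d'.obj b = d'.obj (h.obj (e.symm b)) := by rw [he b]
        _ = x.obj (e.symm b) := this
    refine CategoryTheory.Functor.ext hob ?_
    intro b b' f
    apply g.map_injective
    have h1 := Functor.congr_hom hd2 f
    simp only [Functor.comp_map] at h1
    rw [h1, Functor.map_comp, Functor.map_comp, key]
    simp [eqToHom_map, d]
end

section
/- Let h : A ⥤ B be a functor that is bijective on objects and full, and let g : C ⥤ D be a faithful functor. Let x, x' : A ⥤ C and y, y' : B ⥤ D be functors with h ⋙ y = x ⋙ g and h ⋙ y' = x' ⋙ g, and let d, d' : B ⥤ C be the unique diagonal fill-ins, i.e., h ⋙ d = x, d ⋙ g = y, h ⋙ d' = x', and d' ⋙ g = y'. Let α : x ⟶ x' and β : y ⟶ y' be natural transformations such that whiskerRight α g = whiskerLeft h β (an equality of natural transformations between functors A ⥤ D, well-typed modulo the identifications given by the two commuting-square equalities). Then there exists a unique natural transformation δ : d ⟶ d' such that whiskerLeft h δ = α and whiskerRight δ g = β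 (modulo the identifications given by the equalities h ⋙ d = x, h ⋙ d' = x', d ⋙ g = y, d' ⋙ g = y'). -/
open CategoryTheory

/-!
A 2-cell `δ : d ⟶ d'` with `δ ▷ g = β` must have components `g`-preimages of those of `β`,
which makes it unique since `g` is faithful. Such preimages exist at every object `h a`,
namely the components of `α`, and every object of `B` is of this form. Naturality of the
resulting family is checked after applying the faithful `g`, where it is naturality of `β`.
The condition `h ◁ δ = α` then also follows from faithfulness of `g`.
-/

namespace CategoryTheory.Functor

variable {A B C D : Type*} [Category A] [Category B] [Category C] [Category D]

theorem exists_whiskerRight_eq_of_faithful (g : C ⥤ D) [g.Faithful] {d d' : B ⥤ C}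
    (β : d ⋙ g ⟶ d' ⋙ g) (hβ : ∀ b, ∃ f : d.obj b ⟶ d'.obj b, g.map f = β.app b) :
    ∃ δ : d ⟶ d', whiskerRight δ g = β := by
  choose app happ using hβ
  refine ⟨⟨app, fun b b' f => g.map_injective ?_⟩, NatTrans.ext (funext happ)⟩
  simpa only [map_comp, happ, comp_map] using β.naturality f

theorem whiskerRight_injective_of_faithful (g : C ⥤ D) [g.Faithful] {d d' : B ⥤ C} :
    Function.Injective (fun δ : d ⟶ d' => whiskerRight δ g) :=
  ((whiskeringRight B C D).obj g).map_injective

theorem existsUnique_whiskerLeft_eq_whiskerRight_eq (h : A ⥤ B)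
    (hsurj : Function.Surjective h.obj) (g : C ⥤ D) [g.Faithful] {d d' : B ⥤ C}
    (α : h ⋙ d ⟶ h ⋙ d') (β : d ⋙ g ⟶ d' ⋙ g)
    (hαβ : ∀ a, g.map (α.app a) = β.app (h.obj a)) :
    ∃! δ : d ⟶ d', whiskerLeft h δ = α ∧ whiskerRight δ g = β := by
  obtain ⟨δ, hδ⟩ : ∃ δ : d ⟶ d', whiskerRight δ g = β := by
    refine exists_whiskerRight_eq_of_faithful g β fun b => ?_
    obtain ⟨a, rfl⟩ := hsurj b
    exact ⟨α.app a, hαβ a⟩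
  refine ⟨δ, ⟨?_, hδ⟩, fun δ' hδ' => whiskerRight_injective_of_faithful g (hδ'.2.trans hδ.symm)⟩
  ext a
  exact g.map_injective ((NatTrans.congr_app hδ (h.obj a)).trans (hαβ a).symm)

end CategoryTheory.Functor

theorem bofull_faithful_unique_diagonal_two_cell_general
    {A : Type*} [Category A] {B : Type*} [Category B]
    {C : Type*} [Category C] {D : Type*} [Category D]
    (h : A ⥤ B) (hbij : Function.Bijective h.obj)
    (g : C ⥤ D) (hg : g.Faithful)
    (x x' : A ⥤ C) (y y' : B ⥤ D)
    (hxy : h ⋙ y = x ⋙ g) (hxy' : h ⋙ y' = x' ⋙ g)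
    (d d' : B ⥤ C)
    (hd1 : h ⋙ d = x) (hd2 : d ⋙ g = y)
    (hd1' : h ⋙ d' = x') (hd2' : d' ⋙ g = y')
    (α : x ⟶ x') (β : y ⟶ y')
    (hαβ : CategoryTheory.Functor.whiskerRight α g =
      eqToHom hxy.symm ≫ CategoryTheory.Functor.whiskerLeft h β ≫ eqToHom hxy') :
    ∃! δ : d ⟶ d',
      CategoryTheory.Functor.whiskerLeft h δ = eqToHom hd1 ≫ α ≫ eqToHom hd1'.symm ∧
      CategoryTheory.Functor.whiskerRight δ g = eqToHom hd2 ≫ β ≫ eqToHom hd2'.symm := by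
  subst hd1 hd2 hd1' hd2'
  simp only [eqToHom_refl, Category.id_comp, Category.comp_id] at hαβ ⊢
  exact Functor.existsUnique_whiskerLeft_eq_whiskerRight_eq h hbij.surjective g α β
    fun a => NatTrans.congr_app hαβ a

/-- Two-dimensional diagonal fill-in: bijective-on-objects and full functors are
`Cat`-enriched orthogonal to faithful functors.  Given compatible 2-cells `α`, `β`
between the horizontal sides of two commuting squares with the same vertical sides,
there is a unique 2-cell `δ` between the two diagonal fill-ins whiskering to `α`
and `β` (modulo the identifications `eqToHom` of the commuting equalities). -/
theorem bofull_faithful_unique_diagonal_two_cell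
    {A : Type*} [Category A] {B : Type*} [Category B]
    {C : Type*} [Category C] {D : Type*} [Category D]
    (h : A ⥤ B) (hbij : Function.Bijective h.obj) (hfull : h.Full)
    (g : C ⥤ D) (hg : g.Faithful)
    (x x' : A ⥤ C) (y y' : B ⥤ D)
    (hxy : h ⋙ y = x ⋙ g) (hxy' : h ⋙ y' = x' ⋙ g)
    (d d' : B ⥤ C)
    (hd1 : h ⋙ d = x) (hd2 : d ⋙ g = y)
    (hd1' : h ⋙ d' = x') (hd2' : d' ⋙ g = y')
    (α : x ⟶ x') (β : y ⟶ y')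
    (hαβ : CategoryTheory.Functor.whiskerRight α g =
      eqToHom hxy.symm ≫ CategoryTheory.Functor.whiskerLeft h β ≫ eqToHom hxy') :
    ∃! δ : d ⟶ d',
      CategoryTheory.Functor.whiskerLeft h δ = eqToHom hd1 ≫ α ≫ eqToHom hd1'.symm ∧
      CategoryTheory.Functor.whiskerRight δ g = eqToHom hd2 ≫ β ≫ eqToHom hd2'.symm :=
  bofull_faithful_unique_diagonal_two_cell_general h hbij g hg x x' y y' hxy hxy' d d' hd1 hd2 hd1'
    hd2' α β hαβ
end

section
/- Let T and T' be monads on the category Cat of categories such that the underlying endofunctor of T preserves b.o. full functors (if a functor F is bijective on objects and full, then so is T.map F), and let e : T ⟶ T' be a monad morphism each of whose components e_X : T(X) ⥤ T'(X) is bijective on objects and full. Let (A, a') be a T'-algebra, let B be a category, let m : B ⥤ A be a faithful functor, and let b : T(B) ⥤ B be a T-algebra structure on B making m a morphism of T-algebras from (B, b) to (A, e_A ≫ a'), i.e., b ≫ m = T(m) ≫ e_A ≫ a'. Then there exists a unique functor b' : T'(B) ⥤ B such that e_B ≫ b' = b and b' ≫ m = T'(m) ≫ a'; moreover (B, b') is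 a T'-algebra (it satisfies the unit and multiplication axioms), and m is a morphism of T'-algebras from (B, b') to (A, a'). -/
/-!
Bijective-on-objects full functors are left orthogonal to faithful functors in `Cat`, so the
commuting square `b ≫ m = e_B ≫ T'(m) ≫ a'` has a unique diagonal `b' : T'(B) ⥤ B`. Being
b.o. full, `e_B` and `T(e_B) ≫ e_{T'(B)}` are epimorphisms, so the unit and multiplication
axioms of `b'` follow from those of `b = e_B ≫ b'`.
-/

open CategoryTheory

universe v u

namespace CategoryTheory

theorem Cat.epi_of_surjective_of_full {X Y : Cat.{v, u}} (F : X ⟶ Y)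
    (hF : Function.Surjective F.toFunctor.obj) [F.toFunctor.Full] : Epi F := by
  refine ⟨fun {Z} G H h => Cat.ext (Functor.ext (fun y => ?_) fun y y' f => ?_)⟩
  all_goals have h := congrArg Cat.Hom.toFunctor h
  · obtain ⟨x, rfl⟩ := hF y
    exact Functor.congr_obj h x
  · obtain ⟨x, rfl⟩ := hF y
    obtain ⟨x', rfl⟩ := hF y'
    obtain ⟨g, rfl⟩ := F.toFunctor.map_surjective f
    simpa using Functor.congr_hom h g

theorem Functor.exists_comp_eq_of_bijective_of_full {C D E : Type*} [Category C] [Category D]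
    [Category E] (F : C ⥤ D) (hF : Function.Bijective F.obj) [F.Full] (G : C ⥤ E)
    (hG : ∀ ⦃X Y : C⦄ (f g : X ⟶ Y), F.map f = F.map g → G.map f = G.map g) :
    ∃ L : D ⥤ E, F ⋙ L = G := by
  let σ := Equiv.ofBijective _ hF
  have hσ (y : D) : F.obj (σ.symm y) = y := σ.apply_symm_apply y
  let descend {y y' : D} (f : y ⟶ y') : σ.symm y ⟶ σ.symm y' :=
    F.preimage (eqToHom (hσ y) ≫ f ≫ eqToHom (hσ y').symm)
  have hσ' (x : C) : σ.symm (F.obj x) = x := σ.symm_apply_apply x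
  refine ⟨{ obj := fun y => G.obj (σ.symm y)
            map := fun f => G.map (descend f)
            map_id := fun y => by rw [hG (descend (𝟙 y)) (𝟙 _) (by simp [descend]), G.map_id]
            map_comp := fun f g => by
              rw [← G.map_comp, hG (descend (f ≫ g)) (descend f ≫ descend g) (by simp [descend])] },
    Functor.ext (fun x => congrArg G.obj (hσ' x)) fun x x' f => ?_⟩
  simp only [Functor.comp_map]
  rw [hG (descend (F.map f)) (eqToHom (hσ' x) ≫ f ≫ eqToHom (hσ' x').symm)
    (by simp [descend, eqToHom_map])]
  simp [eqToHom_map]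

theorem Cat.hasLift_of_bijective_of_full_of_faithful {X Y Z W : Cat.{v, u}} {G : X ⟶ Z}
    {F : X ⟶ Y} {m : Z ⟶ W} {G' : Y ⟶ W} (sq : CommSq G F m G')
    (hF : Function.Bijective F.toFunctor.obj) [F.toFunctor.Full] [m.toFunctor.Faithful] :
    sq.HasLift := by
  have hsq := congrArg Cat.Hom.toFunctor sq.w
  simp only [Cat.Hom.comp_toFunctor] at hsq
  obtain ⟨L, hL⟩ := F.toFunctor.exists_comp_eq_of_bijective_of_full hF G.toFunctor
    fun x x' f g hfg => m.toFunctor.map_injective <| by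
      have hf := Functor.congr_hom hsq f
      have hg := Functor.congr_hom hsq g
      simp only [Functor.comp_map] at hf hg
      rw [hf, hg, hfg]
  have hFL : F ≫ Cat.Hom.ofFunctor L = G := Cat.ext hL
  have := Cat.epi_of_surjective_of_full F hF.2
  exact ⟨⟨{ l := Cat.Hom.ofFunctor L
            fac_left := hFL
            fac_right := by rw [← cancel_epi F, reassoc_of% hFL, sq.w] }⟩⟩

theorem MonadHom.μ_app_comp_eq_map_comp_of_app_comp {C : Type*} [Category C] {T T' : Monad C}
    (e : T ⟶ T') {B : C} (b' : (T' : C ⥤ C).obj B ⟶ B) [Epi ((T : C ⥤ C).map (e.app B))]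
    [Epi (e.app ((T' : C ⥤ C).obj B))]
    (h : T.μ.app B ≫ e.app B ≫ b' = (T : C ⥤ C).map (e.app B ≫ b') ≫ e.app B ≫ b') :
    T'.μ.app B ≫ b' = (T' : C ⥤ C).map b' ≫ b' := by
  refine (cancel_epi (e.app _)).1 <| (cancel_epi ((T : C ⥤ C).map (e.app B))).1 ?_
  calc _ = T.μ.app B ≫ e.app B ≫ b' := by simp
    _ = (T : C ⥤ C).map (e.app B) ≫ (T : C ⥤ C).map b' ≫ e.app B ≫ b' := by simp [h]
    _ = _ := by rw [e.naturality_assoc]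

end CategoryTheory

/-- Closure under subalgebras for a quotient of monads on `Cat`.  Let `T`, `T'` be monads
on `Cat` such that `T` preserves bijective-on-objects-and-full functors, and let
`e : T ⟶ T'` be a monad morphism with bijective-on-objects-and-full components.  Given a
`T'`-algebra `(A, a')`, a faithful functor `m : B ⥤ A` and a `T`-algebra structure `b` on
`B` making `m` a `T`-algebra morphism `(B, b) ⟶ (A, e_A ≫ a')`, there is a unique
`b' : T'(B) ⥤ B` with `e_B ≫ b' = b` and `b' ≫ m = T'(m) ≫ a'`; moreover `b'` satisfies
the unit and multiplication axioms (so `(B, b')` is a `T'`-algebra and `m` is a morphism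
of `T'`-algebras `(B, b') ⟶ (A, a')`). -/
theorem subalgebra_closure_of_bofull_monad_quotient
    (T T' : Monad Cat.{v, u})
    (hT : ∀ {X Y : Cat.{v, u}} (F : X ⟶ Y), Function.Bijective F.toFunctor.obj → F.toFunctor.Full →
      Function.Bijective ((T : Cat.{v, u} ⥤ Cat.{v, u}).map F).toFunctor.obj ∧
        ((T : Cat.{v, u} ⥤ Cat.{v, u}).map F).toFunctor.Full)
    (e : T ⟶ T')
    (he : ∀ X : Cat.{v, u}, Function.Bijective (e.app X).toFunctor.obj ∧ (e.app X).toFunctor.Full)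
    (X' : Monad.Algebra T') (B : Cat.{v, u}) (m : B ⟶ X'.A) (hm : m.toFunctor.Faithful)
    (b : (T : Cat.{v, u} ⥤ Cat.{v, u}).obj B ⟶ B)
    (hunit : T.η.app B ≫ b = 𝟙 B)
    (hassoc : T.μ.app B ≫ b = (T : Cat.{v, u} ⥤ Cat.{v, u}).map b ≫ b)
    (hhom : b ≫ m = (T : Cat.{v, u} ⥤ Cat.{v, u}).map m ≫ e.app X'.A ≫ X'.a) :
    ∃ b' : (T' : Cat.{v, u} ⥤ Cat.{v, u}).obj B ⟶ B,
      (e.app B ≫ b' = b) ∧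
      (b' ≫ m = (T' : Cat.{v, u} ⥤ Cat.{v, u}).map m ≫ X'.a) ∧
      (T'.η.app B ≫ b' = 𝟙 B) ∧
      (T'.μ.app B ≫ b' = (T' : Cat.{v, u} ⥤ Cat.{v, u}).map b' ≫ b') ∧
      (∀ b'' : (T' : Cat.{v, u} ⥤ Cat.{v, u}).obj B ⟶ B,
        e.app B ≫ b'' = b →
        b'' ≫ m = (T' : Cat.{v, u} ⥤ Cat.{v, u}).map m ≫ X'.a → b'' = b') := by
  have epi_of_bofull {X Y : Cat.{v, u}} (F : X ⟶ Y)
      (h : Function.Bijective F.toFunctor.obj ∧ F.toFunctor.Full) : Epi F :=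
    have := h.2; Cat.epi_of_surjective_of_full F h.1.2
  have := (he B).2
  have := epi_of_bofull (e.app B) (he B)
  have := epi_of_bofull (e.app _) (he ((T' : Cat.{v, u} ⥤ Cat.{v, u}).obj B))
  have := epi_of_bofull _ (hT (e.app B) (he B).1 (he B).2)
  have sq : CommSq b (e.app B) m ((T' : Cat.{v, u} ⥤ Cat.{v, u}).map m ≫ X'.a) :=
    ⟨by rw [hhom, e.naturality_assoc]⟩
  obtain ⟨⟨⟨b', hb'e, hb'm⟩⟩⟩ := Cat.hasLift_of_bijective_of_full_of_faithful sq (he B).1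
  refine ⟨b', hb'e, hb'm, by simpa [hb'e, hunit] using (e.app_η_assoc B b').symm, ?_,
    fun b'' hb''e _ => (cancel_epi (e.app B)).1 (hb''e.trans hb'e.symm)⟩
  exact e.μ_app_comp_eq_map_comp_of_app_comp b' (by rw [hb'e, hassoc])
end

section
/- Let A and B be categories, let s, t : A ⥤ B be functors, and let α, β : s ⟶ t be natural transformations. Form the sum category A ⊕ B, the copair functors σ = [s, 𝟭 B] and τ = [t, 𝟭 B] : A ⊕ B ⥤ B (restricting to s respectively t on the left summand and to the identity on the right summand), the copaired natural transformations ᾱ, β̄ : σ ⟶ τ (with component α_a respectively β_a at a left object inl(a) and the identity at a right object inr(b)), and the right inclusion functor i : B ⥤ A ⊕ B. Then: (i) i ⋙ σ = i ⋙ τ = 𝟭 B and the whiskerings whiskerLeft i ᾱ and whiskerLeft i β̄ are the identity transformation (modulo these equalities of functors), so the copaired pair is reflexive; and (ii) for every category D and every functor f : B ⥤ D, whiskerRight α f = whiskerRight β f if and only if whiskerRight ᾱ f = whiskerRight β̄ f; consequently a functor coequifies (α, β) exactly when it coequifies (ᾱ, β̄). -/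
/-!
All the identifications involved are definitional. Restricted along `inr_`, the copair functors
are `𝟭 B` and the copaired 2-cells have identity components; restricted along `inl_`, they give
back `s`, `t`, `α`, `β`. Since a natural transformation out of `A ⊕ B` is determined by its two
restrictions, `copair α` and `copair β` become equal after whiskering with `f` exactly when `α`
and `β` do.
-/

open CategoryTheory

universe v u v' u'

namespace BirkhoffStmt10

variable {A : Type u} [Category.{v} A] {B : Type u} [Category.{v} B]

/-- The copaired natural transformation `[α, 1] : [s, 𝟭 B] ⟶ [t, 𝟭 B]`, with component
`α.app a` at a left object `inl a` and the identity at a right object `inr b`. -/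
def copair {s t : A ⥤ B} (α : s ⟶ t) : s.sum' (𝟭 B) ⟶ t.sum' (𝟭 B) where
  app X :=
    match X with
    | Sum.inl a => α.app a
    | Sum.inr b => 𝟙 b
  naturality X Y f :=
    match X, Y, f with
    | Sum.inl _, Sum.inl _, f => α.naturality f.down
    | Sum.inr _, Sum.inr _, f => by
        change f.down ≫ 𝟙 _ = 𝟙 _ ≫ f.down
        simp

open Functor

theorem inr_comp_sum' {C D E : Type*} [Category C] [Category D] [Category E] (F : C ⥤ E)
    (G : D ⥤ E) : Sum.inr_ C D ⋙ F.sum' G = G :=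
  rfl

theorem whiskerLeft_inr_copair {s t : A ⥤ B} (α : s ⟶ t)
    (h : Sum.inr_ A B ⋙ s.sum' (𝟭 B) = Sum.inr_ A B ⋙ t.sum' (𝟭 B)) :
    whiskerLeft (Sum.inr_ A B) (copair α) = eqToHom h := rfl

theorem natTrans_ext_of_whiskerLeft_inl_inr {C D E : Type*} [Category C] [Category D]
    [Category E] {F G : C ⊕ D ⥤ E} {γ δ : F ⟶ G}
    (hl : whiskerLeft (Sum.inl_ C D) γ = whiskerLeft (Sum.inl_ C D) δ)
    (hr : whiskerLeft (Sum.inr_ C D) γ = whiskerLeft (Sum.inr_ C D) δ) : γ = δ := by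
  ext (c | d)
  · exact NatTrans.congr_app hl c
  · exact NatTrans.congr_app hr d

theorem whiskerRight_copair_eq_iff {s t : A ⥤ B} (α β : s ⟶ t) {D : Type*} [Category D]
    (f : B ⥤ D) :
    whiskerRight (copair α) f = whiskerRight (copair β) f ↔ whiskerRight α f = whiskerRight β f :=
  ⟨congrArg (whiskerLeft (Sum.inl_ A B)), fun h => natTrans_ext_of_whiskerLeft_inl_inr h rfl⟩

/-- A coequifier of a pair of 2-cells `(α, β)` is a coequifier of the associated reflexive
pair `([α, 1], [β, 1])` on the sum category: (i) the copaired pair is reflexive, i.e.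
composing with the right inclusion `i : B ⥤ A ⊕ B` gives the identity functor, and
whiskering the copaired 2-cells with `i` gives identity 2-cells (modulo `eqToHom` of
these equalities of functors); (ii) a functor `f` coequifies `(α, β)` if and only if it
coequifies `([α, 1], [β, 1])`. -/
theorem copair_reflexive_and_coequify_iff
    (s t : A ⥤ B) (α β : s ⟶ t) :
    (Sum.inr_ A B ⋙ s.sum' (𝟭 B) = 𝟭 B) ∧
    (Sum.inr_ A B ⋙ t.sum' (𝟭 B) = 𝟭 B) ∧
    (∀ (e₁ : Sum.inr_ A B ⋙ s.sum' (𝟭 B) = 𝟭 B) (e₂ : Sum.inr_ A B ⋙ t.sum' (𝟭 B) = 𝟭 B),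
      CategoryTheory.Functor.whiskerLeft (Sum.inr_ A B) (copair α) = eqToHom (e₁.trans e₂.symm) ∧
      CategoryTheory.Functor.whiskerLeft (Sum.inr_ A B) (copair β) = eqToHom (e₁.trans e₂.symm)) ∧
    (∀ (D : Type u') [Category.{v'} D] (f : B ⥤ D),
      (CategoryTheory.Functor.whiskerRight α f = CategoryTheory.Functor.whiskerRight β f ↔
        CategoryTheory.Functor.whiskerRight (copair α) f = CategoryTheory.Functor.whiskerRight (copair β) f)) :=
  ⟨inr_comp_sum' s _, inr_comp_sum' t _,
    fun _ _ => ⟨whiskerLeft_inr_copair α _, whiskerLeft_inr_copair β _⟩,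
    fun _ _ f => (whiskerRight_copair_eq_iff α β f).symm⟩

end BirkhoffStmt10
end

section
/- Let h : C ⥤ A be a functor that is bijective on objects and full, and let f : C ⥤ B be a functor such that for all objects x, y of C and all morphisms u, v : x ⟶ y, h.map u = h.map v implies f.map u = f.map v. Then there exists a unique functor g : A ⥤ B such that h ⋙ g = f. -/
open CategoryTheory

/-- One-dimensional universal property of a bijective-on-objects and full functor as a
quotient of its kernel: any functor `f : C ⥤ B` identifying all parallel pairs of
morphisms identified by `h : C ⥤ A` factors uniquely through `h`. -/
theorem bofull_unique_factorisation
    {C : Type*} [Category C] {A : Type*} [Category A] {B : Type*} [Category B]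
    (h : C ⥤ A) (hbij : Function.Bijective h.obj) (hfull : h.Full)
    (f : C ⥤ B)
    (hker : ∀ (x y : C) (u v : x ⟶ y), h.map u = h.map v → f.map u = f.map v) :
    ∃! g : A ⥤ B, h ⋙ g = f := by
  let e := Equiv.ofBijective h.obj hbij
  have hobj : ∀ a, h.obj (e.symm a) = a := fun a => e.apply_symm_apply a
  have hsym : ∀ x : C, e.symm (h.obj x) = x := fun x => e.symm_apply_apply x
  let g : A ⥤ B :=
    { obj := fun a => f.obj (e.symm a)
      map := fun {a a'} φ =>
        f.map (h.preimage (eqToHom (hobj a) ≫ φ ≫ eqToHom (hobj a').symm))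
      map_id := by
        intro a
        rw [← f.map_id]
        apply hker
        simp [h.map_preimage]
      map_comp := by
        intro a b c φ ψ
        rw [← f.map_comp]
        apply hker
        simp [h.map_preimage] }
  refine ⟨g, ?_, ?_⟩
  · refine CategoryTheory.Functor.ext (fun x => congrArg f.obj (hsym x)) ?_
    intro x y u
    show f.map (h.preimage _) = _
    have key : h.map (h.preimage
          (eqToHom (hobj (h.obj x)) ≫ h.map u ≫ eqToHom (hobj (h.obj y)).symm))
        = h.map (eqToHom (hsym x) ≫ u ≫ eqToHom (hsym y).symm) := by
      simp [h.map_preimage, eqToHom_map]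
    have := hker _ _ _ _ key
    rw [this]
    simp [eqToHom_map]
  · intro g' hg'
    subst hg'
    refine CategoryTheory.Functor.ext (fun a => (congrArg g'.obj (hobj a)).symm) ?_
    intro a a' φ
    show g'.map φ = eqToHom _ ≫ g'.map (h.map (h.preimage _)) ≫ eqToHom _
    rw [h.map_preimage]
    simp [eqToHom_map]
end
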